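/- arXiv:2212.14144 — 6 statements merged into one kernel-verified Lean document; each statement's English description precedes it below -/
import Mathlib

section
/- For even positive integer n and a > 0, the Chebyshev nodes s_k = a·cos((2k-1)π/(2n)), k = 1,...,n, satisfy ∑_{k=1}^n 1/|s_k| ≤ (4n/(πa))·(γ + log(2n+2)), where γ is the Euler–Mascheroni constant. -/
/-!
Write `n = 2M`. Since `(2k-1)π/(2n) = π/2 - (π/2)·u` with `u = (n+1-2k)/n ∈ [-1, 1]`, Jordan's
inequality `|sin (πu/2)| ≥ |u|` gives `|sₖ| ≥ a|n+1-2k|/n`, and `n+1-2k` is odd, so never zero.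
The numbers `|n+1-2k|` run twice through `1, 3, …, 2M-1`, hence
`∑ 1/|sₖ| ≤ (n/a)(2H_{2M} - H_M)`, and the classical bounds
`γ + log M ≤ H_M`, `H_{2M} ≤ γ + log (2M+1)` together with `π < 3.15` finish the estimate.
-/

open Real Finset

lemma abs_le_abs_sin_pi_div_two_mul {u : ℝ} (hu : |u| ≤ 1) : |u| ≤ |sin (π / 2 * u)| := by
  have h := mul_abs_le_abs_sin (x := π / 2 * u) (by
    rw [abs_mul, abs_of_pos (by positivity)]
    exact mul_le_of_le_one_right (by positivity) hu)
  rwa [abs_mul, abs_of_pos (by positivity), ← mul_assoc, div_mul_div_cancel₀ pi_ne_zero,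
    div_self two_ne_zero, one_mul] at h

lemma abs_div_le_abs_cos_chebyshev_node {n k : ℕ} (hk₁ : 1 ≤ k) (hk₂ : k ≤ n) :
    |((n : ℝ) + 1 - 2 * k) / n| ≤ |cos ((2 * (k : ℝ) - 1) * π / (2 * n))| := by
  have hn : (0 : ℝ) < n := by exact_mod_cast hk₁.trans hk₂
  have hk₁' : (1 : ℝ) ≤ k := by exact_mod_cast hk₁
  have hk₂' : (k : ℝ) ≤ n := by exact_mod_cast hk₂
  have hangle : (2 * (k : ℝ) - 1) * π / (2 * n) = π / 2 - π / 2 * ((n + 1 - 2 * k) / n) := by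
    field_simp
    ring
  rw [hangle, cos_pi_div_two_sub]
  refine abs_le_abs_sin_pi_div_two_mul ?_
  rw [abs_div, abs_of_pos hn, div_le_one hn, abs_le]
  constructor <;> linarith

lemma one_div_abs_chebyshev_node_le {n k : ℕ} (hn : Even n) (hk₁ : 1 ≤ k) (hk₂ : k ≤ n)
    {a : ℝ} (ha : 0 < a) :
    1 / |a * cos ((2 * (k : ℝ) - 1) * π / (2 * n))| ≤ n / a * (1 / |(n : ℝ) + 1 - 2 * k|) := by
  have hn₀ : (0 : ℝ) < n := by exact_mod_cast hk₁.trans hk₂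
  have hodd : (n : ℝ) + 1 - 2 * k ≠ 0 := by
    obtain ⟨m, rfl⟩ := hn
    have : ((m + m + 1 : ℤ) : ℝ) - 2 * k ≠ 0 := by
      exact_mod_cast (by omega : (m + m + 1 : ℤ) - 2 * k ≠ 0)
    push_cast at this ⊢
    exact this
  have hnode := abs_div_le_abs_cos_chebyshev_node hk₁ hk₂
  rw [abs_div, abs_of_pos hn₀] at hnode
  calc 1 / |a * cos ((2 * (k : ℝ) - 1) * π / (2 * n))|
      ≤ 1 / (a * (|(n : ℝ) + 1 - 2 * k| / n)) := by
        rw [abs_mul, abs_of_pos ha]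
        gcongr
    _ = n / a * (1 / |(n : ℝ) + 1 - 2 * k|) := by field_simp

lemma sum_range_one_div_abs_odd (M : ℕ) :
    ∑ j ∈ range (2 * M), 1 / |2 * (M : ℝ) - 1 - 2 * j| = 2 * harmonic (2 * M) - harmonic M := by
  induction M with
  | zero => simp
  | succ M ih =>
    -- the new terms are the two end points `j = 0` and `j = 2M + 1`, both equal to `1/(2M+1)`
    rw [show 2 * (M + 1) = 2 * M + 1 + 1 by ring, sum_range_succ, sum_range_succ']
    have hshift : ∀ j ∈ range (2 * M), 1 / |2 * ((M + 1 : ℕ) : ℝ) - 1 - 2 * ((j + 1 : ℕ) : ℝ)| =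
        1 / |2 * (M : ℝ) - 1 - 2 * j| := by
      intro j _
      push_cast
      ring_nf
    rw [sum_congr rfl hshift, ih, harmonic_succ, harmonic_succ, harmonic_succ]
    push_cast
    have hfirst : |2 * ((M : ℝ) + 1) - 1 - 2 * 0| = 2 * M + 1 := by
      rw [abs_of_pos (by linarith)]
      ring
    have hlast : |2 * ((M : ℝ) + 1) - 1 - 2 * (2 * M + 1)| = 2 * M + 1 := by
      rw [abs_of_neg (by linarith)]
      ring
    have hhalf : (2 * (M : ℝ) + 1 + 1)⁻¹ = ((M : ℝ) + 1)⁻¹ / 2 := by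
      rw [div_eq_mul_inv, ← mul_inv]
      ring_nf
    rw [hfirst, hlast, hhalf]
    ring

lemma sum_Icc_one_div_abs_odd {n M : ℕ} (hn : n = 2 * M) :
    ∑ k ∈ Icc 1 n, 1 / |(n : ℝ) + 1 - 2 * k| = 2 * harmonic n - harmonic M := by
  subst hn
  rw [← Ico_add_one_right_eq_Icc, sum_Ico_eq_sum_range, Nat.add_sub_cancel,
    ← sum_range_one_div_abs_odd]
  refine sum_congr rfl fun j _ ↦ ?_
  push_cast
  ring_nf

lemma pi_mul_two_harmonic_sub_harmonic_le {n M : ℕ} (hn : n = 2 * M) :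
    π * (2 * harmonic n - harmonic M) ≤ 4 * (eulerMascheroniConstant + log (2 * n + 2)) := by
  subst hn
  set γ := eulerMascheroniConstant
  have hγ : 1 / 2 < γ := one_half_lt_eulerMascheroniConstant
  have hlog2 : 0.6931471803 < log 2 := log_two_gt_d9
  rcases eq_or_ne M 0 with rfl | hM
  · norm_num
    linarith
  have hM₁ : (1 : ℝ) ≤ M := by exact_mod_cast Nat.one_le_iff_ne_zero.2 hM
  have hupper : (harmonic (2 * M) : ℝ) ≤ γ + log (2 * M + 1) := by
    have h := (eulerMascheroniSeq_lt_eulerMascheroniConstant (2 * M)).le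
    rw [eulerMascheroniSeq] at h
    push_cast at h
    linarith
  have hlower : γ + log M ≤ harmonic M := by
    have h := (eulerMascheroniConstant_lt_eulerMascheroniSeq' M).le
    rw [eulerMascheroniSeq', if_neg hM] at h
    linarith
  have hlog_split : log (2 * ((2 * M : ℕ) : ℝ) + 2) = log 2 + log (2 * M + 1) := by
    rw [← log_mul two_ne_zero (by positivity)]
    push_cast
    ring_nf
  have hlog_le : log (2 * M + 1) ≤ log 2 + log M + 1 / 2 := by
    have h := log_le_sub_one_of_pos (x := (2 * M + 1) / (2 * M)) (by positivity)
    rw [log_div (by positivity) (by positivity), log_mul two_ne_zero (by positivity)] at h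
    have : (2 * (M : ℝ) + 1) / (2 * M) - 1 ≤ 1 / 2 := by
      rw [div_sub_one (by positivity), div_le_div_iff₀ (by positivity) (by norm_num)]
      linarith
    linarith
  have hlogM : 0 ≤ log M := log_nonneg hM₁
  have hπ : π < 3.15 := pi_lt_d2
  have hnonneg : 0 ≤ γ + 2 * log (2 * M + 1) - log M := by
    linarith [log_le_log (by positivity) (by linarith : (M : ℝ) ≤ 2 * M + 1)]
  rw [hlog_split]
  calc π * (2 * harmonic (2 * M) - harmonic M) ≤ π * (γ + 2 * log (2 * M + 1) - log M) :=
        mul_le_mul_of_nonneg_left (by linarith) pi_pos.le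
    _ ≤ 3.15 * (γ + 2 * log (2 * M + 1) - log M) := by gcongr
    _ ≤ 4 * (γ + (log 2 + log (2 * M + 1))) := by linarith

theorem chebyshev_reciprocal_sum_general (n : ℕ) (hne : Even n) (a : ℝ) (ha : 0 < a) :
    ∑ k ∈ Finset.Icc 1 n, 1 / |a * Real.cos ((2 * (k : ℝ) - 1) * Real.pi / (2 * n))| ≤
      4 * n / (Real.pi * a) * (Real.eulerMascheroniConstant + Real.log (2 * n + 2)) := by
  obtain ⟨M, hM⟩ := hne.two_dvd
  calc ∑ k ∈ Icc 1 n, 1 / |a * cos ((2 * (k : ℝ) - 1) * π / (2 * n))|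
      ≤ ∑ k ∈ Icc 1 n, n / a * (1 / |(n : ℝ) + 1 - 2 * k|) :=
        sum_le_sum fun k hk ↦
          one_div_abs_chebyshev_node_le hne (mem_Icc.1 hk).1 (mem_Icc.1 hk).2 ha
    _ = n / (π * a) * (π * (2 * harmonic n - harmonic M)) := by
        rw [← mul_sum, sum_Icc_one_div_abs_odd hM]
        field_simp
    _ ≤ n / (π * a) * (4 * (eulerMascheroniConstant + log (2 * n + 2))) :=
        mul_le_mul_of_nonneg_left (pi_mul_two_harmonic_sub_harmonic_le hM) (by positivity)
    _ = 4 * n / (π * a) * (eulerMascheroniConstant + log (2 * n + 2)) := by ring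

/-- For even positive `n` and `a > 0`, the Chebyshev nodes `sₖ = a·cos((2k-1)π/(2n))` satisfy
`∑_{k=1}^n 1/|sₖ| ≤ (4n/(πa))·(γ + log(2n+2))`. -/
theorem chebyshev_reciprocal_sum (n : ℕ) (hn : 0 < n) (hne : Even n) (a : ℝ) (ha : 0 < a) :
    ∑ k ∈ Finset.Icc 1 n, 1 / |a * Real.cos ((2 * (k : ℝ) - 1) * Real.pi / (2 * n))| ≤
      4 * n / (Real.pi * a) * (Real.eulerMascheroniConstant + Real.log (2 * n + 2)) :=
  chebyshev_reciprocal_sum_general n hne a ha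
end

section
/- For a positive integer n, H_n − (1/2)·H_{n/2} < (γ + log 2)/2 + log(n+1)/2, where H_m denotes the m-th harmonic number, n is even, and γ is the Euler–Mascheroni constant. -/
/-!
Write `n = 2m`. From below, `Hₙ - log (n + 1) < γ`. From above, `H_m - log (m + 1/2)`
decreases to `γ`, because `1/(k+1) ≤ log (k + 3/2) - log (k + 1/2)` (the first term of the
series for `log (1 + a⁻¹)` at `a = k + 1/2`). Since `m + 1/2 = (n + 1)/2`, this gives
`H_m ≥ γ + log (n + 1) - log 2`, and the two bounds combine to the claim.
-/

open Real

lemma two_div_two_mul_add_one_le_log_one_add_inv {a : ℝ} (ha : 0 < a) :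
    2 / (2 * a + 1) ≤ log (1 + a⁻¹) := by
  have h := le_hasSum (hasSum_log_one_add_inv ha) 0 fun k _ => by positivity
  simpa [div_eq_mul_inv] using h

lemma antitone_harmonic_sub_log_add_half :
    Antitone fun k : ℕ => (harmonic k : ℝ) - log (k + 1 / 2) := by
  refine antitone_nat_of_succ_le fun k => ?_
  have hstep := two_div_two_mul_add_one_le_log_one_add_inv (a := (k : ℝ) + 1 / 2) (by positivity)
  have hlog :
      log (1 + ((k : ℝ) + 1 / 2)⁻¹) = log ((k : ℝ) + 1 + 1 / 2) - log ((k : ℝ) + 1 / 2) := by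
    rw [← log_div (by positivity) (by positivity)]
    congr 1
    field_simp
    ring
  have hinv : 2 / (2 * ((k : ℝ) + 1 / 2) + 1) = ((k : ℝ) + 1)⁻¹ := by
    field_simp
    ring
  rw [hlog, hinv] at hstep
  simp only [harmonic_succ, Rat.cast_add, Rat.cast_inv, Rat.cast_natCast, Nat.cast_add,
    Nat.cast_one]
  linarith

lemma eulerMascheroniConstant_le_harmonic_sub_log_add_half (m : ℕ) :
    eulerMascheroniConstant ≤ (harmonic m : ℝ) - log (m + 1 / 2) := by
  refine le_of_tendsto tendsto_eulerMascheroniSeq ?_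
  filter_upwards [Filter.eventually_ge_atTop m] with k hk
  calc eulerMascheroniSeq k ≤ (harmonic k : ℝ) - log (k + 1 / 2) := by
        unfold eulerMascheroniSeq
        gcongr
        norm_num
    _ ≤ (harmonic m : ℝ) - log (m + 1 / 2) := antitone_harmonic_sub_log_add_half hk

theorem harmonic_diff_bound_general (n : ℕ) (hne : Even n) :
    (harmonic n : ℝ) - (1 / 2) * (harmonic (n / 2) : ℝ) <
      (Real.eulerMascheroniConstant + Real.log 2) / 2 + Real.log (n + 1) / 2 := by
  obtain ⟨m, rfl⟩ := hne
  have hupper := eulerMascheroniSeq_lt_eulerMascheroniConstant (m + m)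
  have hlower := eulerMascheroniConstant_le_harmonic_sub_log_add_half m
  have hhalf : log ((m : ℝ) + 1 / 2) = log (((m + m : ℕ) : ℝ) + 1) - log 2 := by
    rw [← log_div (by positivity) two_ne_zero]
    push_cast
    ring_nf
  rw [show (m + m) / 2 = m by omega]
  unfold eulerMascheroniSeq at hupper
  linarith

/-- For `n` even and positive,
`Hₙ − (1/2)·H_{n/2} < (γ + log 2)/2 + log(n+1)/2`. -/
theorem harmonic_diff_bound (n : ℕ) (hn : 0 < n) (hne : Even n) :
    (harmonic n : ℝ) - (1 / 2) * (harmonic (n / 2) : ℝ) <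
      (Real.eulerMascheroniConstant + Real.log 2) / 2 + Real.log (n + 1) / 2 :=
  harmonic_diff_bound_general n hne
end

section
/- Let n be even and let s_k = cos((2k-1)π/(2n)), k = 1,...,n, be the Chebyshev nodes on [-1,1]. Let p_j be the orthonormal Chebyshev polynomials (p_0 = √(1/n)·T_0, p_j = √(2/n)·T_j for j ≥ 1) and V the n×n matrix with entries V_{kj} = p_j(s_k). Then the k-th entry of V p(0), where p(0) = (p_0(0),...,p_{n-1}(0)), equals (1/n)·(−1)^{k+n/2}·tan((2k-1)π/(2n)). -/
/-- The `k`-th Chebyshev node on `[-1,1]` (with `k` running over `1,…,n` via `Fin n`). -/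
noncomputable def chebNode (n : ℕ) (k : Fin n) : ℝ :=
  Real.cos ((2 * ((k : ℕ) + 1 : ℝ) - 1) * Real.pi / (2 * n))

/-- The orthonormal Chebyshev polynomials: `p₀ = √(1/n)·T₀`, `pⱼ = √(2/n)·Tⱼ` for `j ≥ 1`,
with `Tⱼ(x) = cos(j·arccos x)`. -/
noncomputable def chebOrtho (n j : ℕ) (x : ℝ) : ℝ :=
  if j = 0 then Real.sqrt (1 / n) else Real.sqrt (2 / n) * Real.cos (j * Real.arccos x)

/-- The matrix `V` with entries `V_{kj} = pⱼ(sₖ)`. -/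
noncomputable def chebMatrix (n : ℕ) : Matrix (Fin n) (Fin n) ℝ :=
  fun k j => chebOrtho n (j : ℕ) (chebNode n k)

/-!
With `θ = (2k+1)π/(2n)` the `k`-th entry is `(1/n) ∑_{j<n} w_j cos(jθ) cos(jπ/2)`, where
`w_0 = 1` and `w_j = 2` otherwise. Only even `j = 2i` contribute, with sign `(-1)^i`, and
`2 cos θ cos(2iθ) = cos((2i+1)θ) + cos((2i-1)θ)` makes `cos θ` times the sum telescope to
`±cos((n-1)θ)`. Since `nθ` is an odd multiple of `π/2`, `cos((n-1)θ) = ±sin θ`, and dividing by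
`cos θ`, which is nonzero because `2k+1 ≠ n` for even `n`, gives the tangent.
-/

open Real Finset

noncomputable def chebAngle (n : ℕ) (k : Fin n) : ℝ :=
  (2 * ((k : ℕ) + 1 : ℝ) - 1) * π / (2 * n)

def chebWeight (j : ℕ) : ℝ := if j = 0 then 1 else 2

lemma cos_odd_mul_pi_div_two (m : ℕ) : cos ((2 * m + 1) * π / 2) = 0 := by
  rw [show (2 * m + 1) * π / 2 = m * π + π / 2 by ring, cos_add_pi_div_two, sin_nat_mul_pi,
    neg_zero]

lemma sin_odd_mul_pi_div_two (m : ℕ) : sin ((2 * m + 1) * π / 2) = (-1) ^ m := by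
  rw [show (2 * m + 1) * π / 2 = m * π + π / 2 by ring, sin_add_pi_div_two, cos_nat_mul_pi]

lemma chebOrtho_mul_chebOrtho (n j : ℕ) (x y : ℝ) :
    chebOrtho n j x * chebOrtho n j y =
      chebWeight j / n * (cos (j * arccos x) * cos (j * arccos y)) := by
  by_cases hj : j = 0
  · subst hj
    simp only [chebOrtho, chebWeight, if_pos, Nat.cast_zero, zero_mul, cos_zero, mul_one]
    exact mul_self_sqrt (by positivity)
  · simp only [chebOrtho, chebWeight, if_neg hj]
    have hsq : sqrt (2 / n) * sqrt (2 / n) = 2 / n := mul_self_sqrt (by positivity)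
    linear_combination (cos (j * arccos x) * cos (j * arccos y)) * hsq

lemma cos_mul_sum_chebWeight (θ : ℝ) (M : ℕ) :
    cos θ * ∑ j ∈ range (2 * M + 2), chebWeight j * (cos (j * θ) * cos (j * (π / 2))) =
      (-1) ^ M * cos ((2 * M + 1) * θ) := by
  induction M with
  | zero => simp [sum_range_succ, chebWeight]
  | succ M ih =>
    rw [show 2 * (M + 1) + 2 = 2 * M + 2 + 1 + 1 by ring, sum_range_succ, sum_range_succ,
      mul_add, mul_add, ih]
    have hodd : cos (((2 * M + 2 + 1 : ℕ) : ℝ) * (π / 2)) = 0 := by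
      rw [← cos_odd_mul_pi_div_two (M + 1)]; push_cast; ring_nf
    have heven : cos (((2 * M + 2 : ℕ) : ℝ) * (π / 2)) = (-1) ^ (M + 1) := by
      rw [← cos_nat_mul_pi (M + 1)]; push_cast; ring_nf
    have hprod : 2 * cos θ * cos ((2 * M + 2) * θ) =
        cos ((2 * (M + 1) + 1) * θ) + cos ((2 * M + 1) * θ) := by
      rw [show (2 * (M + 1) + 1) * θ = (2 * M + 2) * θ + θ by ring,
        show (2 * M + 1) * θ = (2 * M + 2) * θ - θ by ring, cos_add, cos_sub]
      ring
    simp only [chebWeight, hodd, heven, if_neg (by omega : 2 * M + 2 ≠ 0)]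
    push_cast
    linear_combination (-1) ^ (M + 1) * hprod

lemma chebAngle_mem_Icc (n : ℕ) (k : Fin n) : chebAngle n k ∈ Set.Icc 0 π := by
  have hk : ((k : ℕ) : ℝ) + 1 ≤ n := by exact_mod_cast k.2
  have hn : (0 : ℝ) < n := by linarith [(k : ℕ).cast_nonneg (α := ℝ)]
  constructor
  · apply div_nonneg _ (by positivity)
    nlinarith [pi_pos, (k : ℕ).cast_nonneg (α := ℝ)]
  · rw [chebAngle, div_le_iff₀ (by positivity)]
    nlinarith [pi_pos]

lemma natCast_mul_chebAngle (n : ℕ) (k : Fin n) :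
    n * chebAngle n k = (2 * (k : ℕ) + 1) * π / 2 := by
  have hn : (n : ℝ) ≠ 0 := by exact_mod_cast (Fin.pos k).ne'
  rw [chebAngle]; field_simp; ring

lemma cos_chebAngle_ne_zero {n : ℕ} (hn : Even n) (k : Fin n) : cos (chebAngle n k) ≠ 0 := by
  intro hcos
  have hθ : chebAngle n k = π / 2 :=
    injOn_cos (chebAngle_mem_Icc n k) ⟨by positivity, by linarith [pi_pos]⟩
      (by rw [hcos, cos_pi_div_two])
  have hodd : ((2 * (k : ℕ) + 1 : ℕ) : ℝ) = n := by
    have h := natCast_mul_chebAngle n k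
    rw [hθ] at h
    push_cast
    nlinarith [pi_pos]
  have hodd' : 2 * (k : ℕ) + 1 = n := by exact_mod_cast hodd
  obtain ⟨r, hr⟩ := hn
  omega

lemma cos_pred_mul_chebAngle (n : ℕ) (k : Fin n) :
    cos ((n - 1) * chebAngle n k) = (-1) ^ (k : ℕ) * sin (chebAngle n k) := by
  rw [sub_one_mul, cos_sub, natCast_mul_chebAngle, cos_odd_mul_pi_div_two,
    sin_odd_mul_pi_div_two]
  ring

lemma chebMatrix_mulVec_apply_eq_sum (n : ℕ) (k : Fin n) :
    (chebMatrix n).mulVec (fun j : Fin n => chebOrtho n (j : ℕ) 0) k =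
      1 / n * ∑ j ∈ range n,
        chebWeight j * (cos (j * chebAngle n k) * cos (j * (π / 2))) := by
  have harccos : arccos (chebNode n k) = chebAngle n k :=
    arccos_cos (chebAngle_mem_Icc n k).1 (chebAngle_mem_Icc n k).2
  simp only [Matrix.mulVec, dotProduct, chebMatrix, chebOrtho_mul_chebOrtho, harccos,
    arccos_zero, mul_sum]
  rw [Fin.sum_univ_eq_sum_range (fun j => chebWeight j / n *
    (cos (j * chebAngle n k) * cos (j * (π / 2)))) n]
  exact sum_congr rfl fun j _ => by ring

theorem chebMatrix_mulVec_at_zero_general (n : ℕ) (hne : Even n) (k : Fin n) :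
    (chebMatrix n).mulVec (fun j : Fin n => chebOrtho n (j : ℕ) 0) k =
      (1 / n) * (-1) ^ ((k : ℕ) + 1 + n / 2) *
        Real.tan ((2 * ((k : ℕ) + 1 : ℝ) - 1) * Real.pi / (2 * n)) := by
  obtain ⟨M, hM⟩ : ∃ M, n = 2 * M + 2 := ⟨n / 2 - 1, by have := k.pos; grind⟩
  have htel := cos_mul_sum_chebWeight (chebAngle n k) M
  rw [← hM, show (2 * M + 1 : ℝ) = n - 1 by rw [hM]; push_cast; ring,
    cos_pred_mul_chebAngle] at htel
  have hsum : ∑ j ∈ range n, chebWeight j * (cos (j * chebAngle n k) * cos (j * (π / 2))) =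
      (-1) ^ (M + (k : ℕ)) * tan (chebAngle n k) := by
    have hcos := cos_chebAngle_ne_zero hne k
    apply mul_left_cancel₀ hcos
    rw [htel, tan_eq_sin_div_cos, pow_add]
    field_simp
  rw [chebMatrix_mulVec_apply_eq_sum, hsum, show (k : ℕ) + 1 + n / 2 = M + (k : ℕ) + 2 by omega]
  simp only [chebAngle]
  ring

/-- For `n` even, the `k`-th entry of `V p(0)` equals
`(1/n)·(−1)^{k+n/2}·tan((2k-1)π/(2n))`. -/
theorem chebMatrix_mulVec_at_zero (n : ℕ) (hn : 0 < n) (hne : Even n) (k : Fin n) :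
    (chebMatrix n).mulVec (fun j : Fin n => chebOrtho n (j : ℕ) 0) k =
      (1 / n) * (-1) ^ ((k : ℕ) + 1 + n / 2) *
        Real.tan ((2 * ((k : ℕ) + 1 : ℝ) - 1) * Real.pi / (2 * n)) :=
  chebMatrix_mulVec_at_zero_general n hne k
end

section
/- Let A be a normal complex matrix with eigenvalues λ_1,...,λ_n, and let λ be an eigenvalue of an arbitrary matrix B of the same size. Then there exists an index k such that |λ − λ_k| ≤ ‖B − A‖, where ‖·‖ is the operator (spectral) norm. -/
/-!
If `λ` were at distance `d > ‖B - A‖` from the spectrum of the normal element `A`, then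
`λ - A` would be a normal unit whose inverse has norm at most `1 / d`, because the norm of a
normal element of a C⋆-algebra is its spectral radius. The perturbation
`λ - B = (λ - A) - (B - A)` of that unit would then still be a unit (Neumann series),
contradicting `λ ∈ σ(B)`. Matrices enter through the C⋆-algebra isomorphism with operators on
`EuclideanSpace ℂ (Fin n)`.
-/

open Polynomial Metric

theorem Matrix.spectrum_eq_range_of_charpoly_eq_prod {K ι : Type*} [Field K] [Fintype ι]
    [DecidableEq ι] {M : Matrix ι ι K} {μ : ι → K} (hμ : M.charpoly = ∏ i, (X - C (μ i))) :
    spectrum K M = Set.range μ := by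
  ext z
  rw [mem_spectrum_iff_isRoot_charpoly, hμ, isRoot_prod]
  simp [sub_eq_zero, eq_comm]

theorem spectrum.nontrivial_of_mem {R A : Type*} [CommSemiring R] [Ring A] [Algebra R A]
    {r : R} {a : A} (h : r ∈ spectrum R a) : Nontrivial A :=
  not_subsingleton_iff_nontrivial.1 fun _ ↦ by simp [spectrum.of_subsingleton] at h

section CStarAlgebra

variable {A : Type*} [CStarAlgebra A]

theorem IsStarNormal.algebraMap_sub (r : ℂ) (a : A) [IsStarNormal a] :
    IsStarNormal (algebraMap ℂ A r - a) := by
  rw [Algebra.algebraMap_eq_smul_one]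
  exact ((Commute.one_left _).smul_left r).isStarNormal_sub

theorem IsStarNormal.norm_le_of_forall_mem_spectrum {a : A} [IsStarNormal a] {r : ℝ}
    (hr : 0 ≤ r) (h : ∀ z ∈ spectrum ℂ a, ‖z‖ ≤ r) : ‖a‖ ≤ r := by
  lift r to NNReal using hr
  rw [← coe_nnnorm, NNReal.coe_le_coe, ← ENNReal.coe_le_coe,
    ← IsStarNormal.spectralRadius_eq_nnnorm a]
  exact iSup₂_le fun z hz ↦ ENNReal.coe_le_coe.2 (h z hz)

theorem IsStarNormal.norm_inv_le {u : Aˣ} [IsStarNormal (u : A)] {d : ℝ} (hd : 0 < d)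
    (h : ∀ z ∈ spectrum ℂ (u : A), d ≤ ‖z‖) : ‖(↑u⁻¹ : A)‖ ≤ d⁻¹ := by
  refine norm_le_of_forall_mem_spectrum (inv_nonneg.2 hd.le) fun z hz ↦ ?_
  have hdz : d ≤ ‖z‖⁻¹ := norm_inv z ▸ h _ (spectrum.inv₀_mem_iff.2 hz)
  exact (le_inv_comm₀ hd (inv_pos.1 (hd.trans_le hdz))).1 hdz

theorem IsStarNormal.infDist_spectrum_le {a b : A} [IsStarNormal a] {lam : ℂ}
    (hlam : lam ∈ spectrum ℂ b) : infDist lam (spectrum ℂ a) ≤ ‖b - a‖ := by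
  have := spectrum.nontrivial_of_mem hlam
  by_contra! hlt
  set d := infDist lam (spectrum ℂ a)
  have hd : 0 < d := (norm_nonneg _).trans_lt hlt
  have hlam_a : lam ∉ spectrum ℂ a := fun h ↦ hd.ne' (infDist_zero_of_mem h)
  obtain ⟨u, hu⟩ := spectrum.notMem_iff.1 hlam_a
  have : IsStarNormal (u : A) := hu ▸ IsStarNormal.algebraMap_sub lam a
  have hu_inv : ‖(↑u⁻¹ : A)‖ ≤ d⁻¹ := by
    refine norm_inv_le hd fun z hz ↦ ?_
    rw [hu, ← spectrum.singleton_sub_eq] at hz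
    obtain ⟨x, hx, w, hw, rfl⟩ := hz
    rw [Set.mem_singleton_iff.1 hx]
    simpa [dist_eq_norm] using infDist_le_dist_of_mem (x := lam) hw
  have hnear : ‖(algebraMap ℂ A lam - b) - u‖ < ‖(↑u⁻¹ : A)‖⁻¹ := by
    rw [hu, sub_sub_sub_cancel_left, norm_sub_rev]
    exact hlt.trans_le (le_inv_comm₀ (Units.norm_pos u⁻¹) hd |>.1 hu_inv)
  exact spectrum.mem_iff.1 hlam (u.ofNearby _ hnear).isUnit

theorem IsStarNormal.exists_mem_spectrum_norm_sub_le {a b : A} [IsStarNormal a] {lam : ℂ}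
    (hlam : lam ∈ spectrum ℂ b) : ∃ z ∈ spectrum ℂ a, ‖lam - z‖ ≤ ‖b - a‖ := by
  have := spectrum.nontrivial_of_mem hlam
  obtain ⟨z, hz, hdist⟩ := (spectrum.isCompact a).exists_infDist_eq_dist (spectrum.nonempty a) lam
  exact ⟨z, hz, dist_eq_norm lam z ▸ hdist ▸ infDist_spectrum_le hlam⟩

end CStarAlgebra

/-- Bauer–Fike theorem for normal matrices: if `A` is normal with eigenvalues `μ₁,…,μₙ`
and `λ` is an eigenvalue of `B`, then `|λ − μₖ| ≤ ‖B − A‖` for some `k`, where `‖·‖` is the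
spectral (operator) norm. -/
theorem bauer_fike {n : ℕ} (A B : Matrix (Fin n) (Fin n) ℂ)
    (hA : IsStarNormal A) (μ : Fin n → ℂ)
    (hμ : A.charpoly = ∏ i, (Polynomial.X - Polynomial.C (μ i)))
    (lam : ℂ) (hlam : lam ∈ spectrum ℂ B) :
    ∃ k, ‖lam - μ k‖ ≤ ‖Matrix.toEuclideanCLM (𝕜 := ℂ) (B - A)‖ := by
  set T := Matrix.toEuclideanCLM (𝕜 := ℂ) (n := Fin n)
  have : IsStarNormal (T A) := hA.map T A
  obtain ⟨z, hz, hle⟩ :=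
    IsStarNormal.exists_mem_spectrum_norm_sub_le (a := T A) (b := T B) <| by
      rwa [AlgEquiv.spectrum_eq T B]
  rw [AlgEquiv.spectrum_eq T A, Matrix.spectrum_eq_range_of_charpoly_eq_prod hμ] at hz
  obtain ⟨k, rfl⟩ := hz
  exact ⟨k, by rwa [map_sub]⟩
end

section
/- For σ, T > 0 and integer m ≥ 1, ∑_{n=2^{m-1}}^∞ (2πσ²)^{-1/4} e^{-n²T²/(4σ²)} ≤ (π/2)^{1/4}·(√σ/T)·e^{-(T(2^{m-1}-1)/(2σ))²}. -/
/-!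
With `a = T / (2σ)` and `N = 2^(m-1)`, the `n`-th term is `(2πσ²)^{-1/4} e^{-(a(n+N))²}`.
Splitting `a(n+N) = a(n+1) + a(N-1)` and dropping the cross term gives
`e^{-(a(n+N))²} ≤ e^{-(a(N-1))²} e^{-a²(n+1)²}`, and the right Riemann sum of the decreasing
Gaussian over `[0, ∞)` is at most `∫₀^∞ e^{-a²x²} dx = √π / (2a)`.
-/

open Real MeasureTheory Set

theorem tsum_le_integral_Ioi_of_le_antitoneOn {g : ℕ → ℝ} {f : ℝ → ℝ}
    (hg0 : ∀ n, 0 ≤ g n) (hgf : ∀ n : ℕ, g n ≤ f (n + 1)) (hf : AntitoneOn f (Ici 0))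
    (hf0 : ∀ x ∈ Ioi 0, 0 ≤ f x) (hfi : IntegrableOn f (Ioi 0)) :
    ∑' n, g n ≤ ∫ x in Ioi 0, f x := by
  refine Real.tsum_le_of_sum_range_le hg0 fun M => ?_
  calc ∑ n ∈ Finset.range M, g n
      ≤ ∑ n ∈ Finset.range M, f (0 + ↑(n + 1)) := by
        gcongr with n
        simpa using hgf n
    _ ≤ ∫ x in (0 : ℝ)..0 + M, f x := (hf.mono Icc_subset_Ici_self).sum_le_integral
    _ ≤ ∫ x in Ioi 0, f x := by
        rw [zero_add, intervalIntegral.integral_of_le M.cast_nonneg]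
        exact setIntegral_mono_set hfi (ae_restrict_of_forall_mem measurableSet_Ioi hf0)
          (Ioc_subset_Ioi_self.eventuallyLE)

theorem tsum_le_of_le_mul_exp_neg_mul_sq {g : ℕ → ℝ} {K b : ℝ} (hK : 0 ≤ K) (hb : 0 < b)
    (hg0 : ∀ n, 0 ≤ g n) (hg : ∀ n : ℕ, g n ≤ K * exp (-b * ((n : ℝ) + 1) ^ 2)) :
    ∑' n, g n ≤ K * (√(π / b) / 2) := by
  have hanti : AntitoneOn (fun x : ℝ => K * exp (-b * x ^ 2)) (Ici 0) := by
    intro x hx y _ hxy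
    have : x ^ 2 ≤ y ^ 2 := pow_le_pow_left₀ hx hxy 2
    exact mul_le_mul_of_nonneg_left (exp_le_exp.2 (by nlinarith)) hK
  rw [← integral_gaussian_Ioi, ← integral_const_mul]
  exact tsum_le_integral_Ioi_of_le_antitoneOn hg0 hg hanti (fun x _ => by positivity)
    ((integrable_exp_neg_mul_sq hb).const_mul K).integrableOn

theorem exp_neg_sq_add_le {x c : ℝ} (hx : 0 ≤ x) (hc : 0 ≤ c) :
    exp (-(x + c) ^ 2) ≤ exp (-c ^ 2) * exp (-x ^ 2) := by
  rw [← exp_add, exp_le_exp]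
  nlinarith [mul_nonneg hx hc]

theorem rpow_neg_one_div_four_mul_sqrt_pi {σ : ℝ} (hσ : 0 < σ) :
    (2 * π * σ ^ 2) ^ (-(1 : ℝ) / 4) * √π * σ = (π / 2) ^ ((1 : ℝ) / 4) * √σ := by
  have hπ := pi_pos
  rw [← pow_left_inj₀ (by positivity) (by positivity) four_ne_zero]
  have h4 : ∀ {x : ℝ} (r : ℝ), 0 ≤ x → (x ^ r) ^ 4 = x ^ (4 * r) := fun r hx => by
    rw [← rpow_natCast, ← rpow_mul hx]; ring_nf
  have hsq : ∀ {x : ℝ}, 0 ≤ x → √x ^ 4 = x ^ 2 := fun hx => by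
    rw [show 4 = 2 * 2 from rfl, pow_mul, sq_sqrt hx]
  rw [mul_pow, mul_pow, mul_pow, h4 _ (by positivity), h4 _ (by positivity), hsq hπ.le,
    hsq hσ.le]
  norm_num [rpow_neg_one]
  field_simp

theorem gaussian_tail_sum_general (σ T : ℝ) (hσ : 0 < σ) (hT : 0 < T) (m : ℕ) :
    ∑' n : ℕ, (2 * π * σ ^ 2) ^ (-(1 : ℝ) / 4) *
        Real.exp (-(((n : ℝ) + 2 ^ (m - 1)) ^ 2 * T ^ 2) / (4 * σ ^ 2)) ≤
      (π / 2) ^ ((1 : ℝ) / 4) * (Real.sqrt σ / T) *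
        Real.exp (-(T * (2 ^ (m - 1) - 1) / (2 * σ)) ^ 2) := by
  set C : ℝ := (2 * π * σ ^ 2) ^ (-(1 : ℝ) / 4)
  set N : ℝ := 2 ^ (m - 1)
  set a : ℝ := T / (2 * σ)
  have ha : 0 < a := by positivity
  have hN : 1 ≤ N := one_le_pow₀ one_le_two
  have hterm : ∀ n : ℕ, C * exp (-(((n : ℝ) + N) ^ 2 * T ^ 2) / (4 * σ ^ 2)) ≤
      C * exp (-(a * (N - 1)) ^ 2) * exp (-a ^ 2 * ((n : ℝ) + 1) ^ 2) := by
    intro n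
    have hsplit : -(((n : ℝ) + N) ^ 2 * T ^ 2) / (4 * σ ^ 2) =
        -(a * ((n : ℝ) + 1) + a * (N - 1)) ^ 2 := by
      simp only [a]; field_simp; ring
    rw [hsplit, mul_assoc, neg_mul, ← mul_pow]
    gcongr
    exact exp_neg_sq_add_le (by positivity) (mul_nonneg ha.le (by linarith))
  refine (tsum_le_of_le_mul_exp_neg_mul_sq (by positivity) (by positivity)
    (fun n => by positivity) hterm).trans_eq ?_
  rw [sqrt_div pi_pos.le, sqrt_sq ha.le, ← mul_div_assoc (_ ^ _),
    ← rpow_neg_one_div_four_mul_sqrt_pi hσ]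
  simp only [a, C]
  field_simp

/-- Gaussian tail sum bound: for `σ, T > 0` and `m ≥ 1`,
`∑_{n=2^{m-1}}^∞ (2πσ²)^{-1/4} e^{-n²T²/(4σ²)} ≤ (π/2)^{1/4}·(√σ/T)·e^{-(T(2^{m-1}-1)/(2σ))²}`. -/
theorem gaussian_tail_sum (σ T : ℝ) (hσ : 0 < σ) (hT : 0 < T) (m : ℕ) (hm : 1 ≤ m) :
    ∑' n : ℕ, (2 * π * σ ^ 2) ^ (-(1 : ℝ) / 4) *
        Real.exp (-(((n : ℝ) + 2 ^ (m - 1)) ^ 2 * T ^ 2) / (4 * σ ^ 2)) ≤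
      (π / 2) ^ ((1 : ℝ) / 4) * (Real.sqrt σ / T) *
        Real.exp (-(T * (2 ^ (m - 1) - 1) / (2 * σ)) ^ 2) :=
  gaussian_tail_sum_general σ T hσ hT m
end

section
/- For every positive integer n and x > 0, the n-th Bell (Touchard) polynomial satisfies B_n(x) ≤ (n / log(1 + n/x))^n. -/
/-!
Expanding `j ^ n` in descending factorials gives Dobinski's formula
`Bₙ(x) = e^{-x} ∑ⱼ jⁿ xʲ / j!`. For every `t > 0`, the elementary bound `(t j)ⁿ ≤ (n/e)ⁿ e^{t j}`
(from `1 + u ≤ eᵘ`) then gives `tⁿ Bₙ(x) ≤ (n/e)ⁿ exp (x (eᵗ - 1))`, and the choice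
`t = log (1 + n/x)`, which makes `x (eᵗ - 1) = n`, turns this into `tⁿ Bₙ(x) ≤ nⁿ`.
-/

open Finset Real
open scoped Nat

/-- Stirling numbers of the second kind `S(n,k)`. -/
def stirling2 : ℕ → ℕ → ℕ
  | 0, 0 => 1
  | 0, _ + 1 => 0
  | _ + 1, 0 => 0
  | n + 1, k + 1 => (k + 1) * stirling2 n (k + 1) + stirling2 n k

theorem stirling2_eq_stirlingSecond : ∀ n k : ℕ, stirling2 n k = Nat.stirlingSecond n k
  | 0, 0 | 0, _ + 1 | _ + 1, 0 => rfl
  | n + 1, k + 1 => by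
    rw [stirling2, Nat.stirlingSecond_succ_succ, stirling2_eq_stirlingSecond n,
      stirling2_eq_stirlingSecond n]

theorem Nat.mul_descFactorial (j k : ℕ) :
    j * j.descFactorial k = k * j.descFactorial k + j.descFactorial (k + 1) := by
  rw [Nat.descFactorial_succ]
  rcases le_or_gt k j with h | h
  · rw [← Nat.add_mul, Nat.add_sub_cancel' h]
  · simp [Nat.descFactorial_eq_zero_iff_lt.2 h]

theorem Nat.pow_eq_sum_stirlingSecond_mul_descFactorial (n j : ℕ) :
    j ^ n = ∑ k ∈ range (n + 1), stirlingSecond n k * j.descFactorial k := by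
  induction n with
  | zero => simp
  | succ n ih =>
    have shift : ∑ k ∈ range (n + 1), stirlingSecond n k * (k * j.descFactorial k) =
        ∑ k ∈ range (n + 1), (k + 1) * stirlingSecond n (k + 1) * j.descFactorial (k + 1) := by
      rw [sum_range_succ' _ n, sum_range_succ _ n, stirlingSecond_eq_zero_of_lt n.lt_succ_self]
      simp only [zero_mul, mul_zero, add_zero, mul_left_comm, mul_assoc]
    calc j ^ (n + 1)
        = ∑ k ∈ range (n + 1), (stirlingSecond n k * (k * j.descFactorial k) +
            stirlingSecond n k * j.descFactorial (k + 1)) := by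
          rw [pow_succ, ih, sum_mul]
          refine sum_congr rfl fun k _ => ?_
          rw [mul_assoc, mul_comm _ j, mul_descFactorial, Nat.mul_add]
      _ = ∑ k ∈ range (n + 1), stirlingSecond (n + 1) (k + 1) * j.descFactorial (k + 1) := by
          rw [sum_add_distrib, shift, ← sum_add_distrib]
          simp only [stirlingSecond_succ_succ, Nat.add_mul]
      _ = ∑ k ∈ range (n + 2), stirlingSecond (n + 1) k * j.descFactorial k := by
          rw [sum_range_succ' _ (n + 1)]
          simp

noncomputable def touchard (n : ℕ) (x : ℝ) : ℝ :=
  ∑ k ∈ range (n + 1), (Nat.stirlingSecond n k : ℝ) * x ^ k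

theorem hasSum_descFactorial_mul_pow_div_factorial (k : ℕ) (x : ℝ) :
    HasSum (fun j : ℕ => (j.descFactorial k : ℝ) * x ^ j / j !) (x ^ k * exp x) := by
  refine (hasSum_nat_add_iff' k).mp ?_
  have head : ∑ j ∈ range k, (j.descFactorial k : ℝ) * x ^ j / j ! = 0 :=
    sum_eq_zero fun j hj => by
      simp [Nat.descFactorial_eq_zero_iff_lt.2 (mem_range.1 hj)]
  have shifted (j : ℕ) :
      ((j + k).descFactorial k : ℝ) * x ^ (j + k) / (j + k)! = x ^ k * (x ^ j / j !) := by
    have hfact : (j ! : ℝ) * (j + k).descFactorial k = (j + k)! := by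
      have := Nat.factorial_mul_descFactorial (Nat.le_add_left k j)
      rw [Nat.add_sub_cancel] at this
      exact_mod_cast this
    rw [← hfact, pow_add]
    field_simp
  rw [head, sub_zero, funext shifted, exp_eq_exp_ℝ]
  exact (NormedSpace.expSeries_div_hasSum_exp x).mul_left _

/-- Dobinski's formula. -/
theorem hasSum_pow_mul_pow_div_factorial (n : ℕ) (x : ℝ) :
    HasSum (fun j : ℕ => (j : ℝ) ^ n * x ^ j / j !) (exp x * touchard n x) := by
  have expand (j : ℕ) : (j : ℝ) ^ n * x ^ j / j ! = ∑ k ∈ range (n + 1),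
      (Nat.stirlingSecond n k : ℝ) * ((j.descFactorial k : ℝ) * x ^ j / j !) := by
    rw [← Nat.cast_pow, Nat.pow_eq_sum_stirlingSecond_mul_descFactorial, Nat.cast_sum,
      sum_mul, sum_div]
    push_cast
    exact sum_congr rfl fun k _ => by ring
  have hsum := hasSum_sum fun k (_ : k ∈ range (n + 1)) =>
    (hasSum_descFactorial_mul_pow_div_factorial k x).mul_left (Nat.stirlingSecond n k : ℝ)
  have hvalue : exp x * touchard n x =
      ∑ k ∈ range (n + 1), (Nat.stirlingSecond n k : ℝ) * (x ^ k * exp x) := by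
    rw [touchard, mul_sum]
    exact sum_congr rfl fun k _ => by ring
  rw [funext expand, hvalue]
  exact hsum

theorem pow_le_div_exp_one_pow_mul_exp (n : ℕ) {y : ℝ} (hy : 0 ≤ y) :
    y ^ n ≤ (n / exp 1) ^ n * exp y := by
  obtain rfl | hn := n.eq_zero_or_pos
  · simpa using one_le_exp hy
  have hn' : (0 : ℝ) < n := by positivity
  have hlin : y ≤ n / exp 1 * exp (y / n) :=
    calc y = n * (y / n - 1 + 1) := by field_simp; ring
      _ ≤ n * exp (y / n - 1) := by gcongr; exact add_one_le_exp _
      _ = n / exp 1 * exp (y / n) := by rw [exp_sub]; ring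
  calc y ^ n ≤ (n / exp 1 * exp (y / n)) ^ n := pow_le_pow_left₀ hy hlin n
    _ = (n / exp 1) ^ n * exp y := by
      rw [mul_pow, ← exp_nat_mul, mul_div_cancel₀ _ hn'.ne']

theorem pow_mul_touchard_le (n : ℕ) {x t : ℝ} (hx : 0 ≤ x) (ht : 0 ≤ t) :
    t ^ n * touchard n x ≤ (n / exp 1) ^ n * exp (x * (exp t - 1)) := by
  have termwise (j : ℕ) : t ^ n * ((j : ℝ) ^ n * x ^ j / j !) ≤
      (n / exp 1) ^ n * ((exp t * x) ^ j / j !) :=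
    calc t ^ n * ((j : ℝ) ^ n * x ^ j / j !) = (t * j) ^ n * x ^ j / j ! := by ring
      _ ≤ (n / exp 1) ^ n * exp (t * j) * x ^ j / j ! := by
        gcongr; exact pow_le_div_exp_one_pow_mul_exp n (by positivity)
      _ = (n / exp 1) ^ n * ((exp t * x) ^ j / j !) := by
        rw [mul_comm t, exp_nat_mul, mul_pow]; ring
  have hle := hasSum_le termwise ((hasSum_pow_mul_pow_div_factorial n x).mul_left _)
    ((NormedSpace.expSeries_div_hasSum_exp (exp t * x)).mul_left _)
  rw [← exp_eq_exp_ℝ] at hle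
  rw [mul_sub, mul_one, exp_sub, mul_comm x, mul_div_assoc', le_div_iff₀ (exp_pos x)]
  linarith

theorem bell_polynomial_le_general (n : ℕ) (x : ℝ) (hx : 0 < x) :
    ∑ k ∈ Finset.range (n + 1), (stirling2 n k : ℝ) * x ^ k ≤
      ((n : ℝ) / Real.log (1 + n / x)) ^ n := by
  obtain rfl | hn := n.eq_zero_or_pos
  · simp [stirling2]
  set t := log (1 + n / x)
  have ht : 0 < t := log_pos (lt_add_of_pos_right 1 (by positivity))
  have hxt : x * (exp t - 1) = n := by
    rw [exp_log (by positivity)]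
    field_simp
    ring
  have hbound := pow_mul_touchard_le n hx.le ht.le
  rw [hxt, div_pow, ← exp_nat_mul, mul_one, div_mul_cancel₀ _ (exp_ne_zero _)] at hbound
  simp only [stirling2_eq_stirlingSecond]
  rw [div_pow, le_div_iff₀ (pow_pos ht n), mul_comm]
  exact hbound

/-- Sharp bound on Bell (Touchard) polynomials: for `n ≥ 1` and `x > 0`,
`Bₙ(x) = ∑_{k=0}^n S(n,k) x^k ≤ (n/log(1 + n/x))^n`. -/
theorem bell_polynomial_le (n : ℕ) (hn : 0 < n) (x : ℝ) (hx : 0 < x) :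
    ∑ k ∈ Finset.range (n + 1), (stirling2 n k : ℝ) * x ^ k ≤
      ((n : ℝ) / Real.log (1 + n / x)) ^ n :=
  bell_polynomial_le_general n x hx
end
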